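/- arXiv:1809.05364 — 6 statements merged into one kernel-verified Lean document; each statement's English description precedes it below -/
import Mathlib

section
/- Let d ≥ 1 and k ≥ 2 be integers. The multinomial coefficient (dk)! / (k! · (d!)^k) is odd if and only if d is a power of 2. -/
/-!
Write `s n` for the binary digit sum of `n`. Legendre's formula `v₂(n!) = n - s n` gives
`v₂((dk)! / (k! (d!)^k)) = k s(d) + s(k) - k - s(dk)`. The digit sum is subadditive (because
`a! b! ∣ (a + b)!`) and hence submultiplicative, so this valuation is at least
`(k - s k)(s d - 1)`; as `s k < k` for `k ≥ 2`, oddness forces `s d = 1`, i.e. `d` is a power of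
two. Conversely `s (2^a k) = s k`, and the valuation is then `0`.
-/

open Nat

section Legendre

variable {p : ℕ} [Fact p.Prime]

theorem sub_one_mul_padicValNat_factorial_add_digits_sum (n : ℕ) :
    (p - 1) * padicValNat p n ! + (p.digits n).sum = n := by
  rw [sub_one_mul_padicValNat_factorial]
  exact Nat.sub_add_cancel (digit_sum_le p n)

theorem padicValNat_factorial_add_le (a b : ℕ) :
    padicValNat p a ! + padicValNat p b ! ≤ padicValNat p (a + b)! := by
  have hchoose : (a + b).choose b ≠ 0 := choose_ne_zero (Nat.le_add_left b a)
  rw [← add_choose_mul_factorial_mul_factorial,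
    padicValNat.mul (mul_ne_zero hchoose (factorial_ne_zero a)) (factorial_ne_zero b),
    padicValNat.mul hchoose (factorial_ne_zero a)]
  omega

theorem digits_sum_add_le (a b : ℕ) :
    (p.digits (a + b)).sum ≤ (p.digits a).sum + (p.digits b).sum := by
  have hv := Nat.mul_le_mul_left (p - 1) (padicValNat_factorial_add_le (p := p) a b)
  have ha := sub_one_mul_padicValNat_factorial_add_digits_sum (p := p) a
  have hb := sub_one_mul_padicValNat_factorial_add_digits_sum (p := p) b
  have hab := sub_one_mul_padicValNat_factorial_add_digits_sum (p := p) (a + b)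
  rw [Nat.mul_add] at hv
  omega

end Legendre

theorem digits_sum_pos (b : ℕ) {n : ℕ} (hn : n ≠ 0) : 0 < (b.digits n).sum :=
  List.sum_pos_iff_exists_pos_nat.mpr
    ⟨_, List.getLast_mem _, Nat.pos_of_ne_zero (getLast_digit_ne_zero b hn)⟩

theorem padicValNat_two_factorial_add_digits_sum (n : ℕ) :
    padicValNat 2 n ! + (digits 2 n).sum = n := by
  simpa using sub_one_mul_padicValNat_factorial_add_digits_sum (p := 2) n

theorem digits_two_sum_lt_self {n : ℕ} (hn : 2 ≤ n) : (digits 2 n).sum < n := by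
  have h2 : 1 ≤ padicValNat 2 n ! :=
    one_le_padicValNat_of_dvd (factorial_ne_zero n) (dvd_factorial two_pos hn)
  have := padicValNat_two_factorial_add_digits_sum n
  omega

theorem digits_two_sum_two_mul (n : ℕ) : (digits 2 (2 * n)).sum = (digits 2 n).sum := by
  rcases Nat.eq_zero_or_pos n with rfl | hn
  · rfl
  · simp [digits_base_mul one_lt_two hn]

theorem digits_two_sum_two_mul_add_one (n : ℕ) :
    (digits 2 (2 * n + 1)).sum = (digits 2 n).sum + 1 := by
  rw [digits_add_two_add_one 0 (2 * n), show (2 * n + 1) / 2 = n by omega,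
    show (2 * n + 1) % 2 = 1 by omega, List.sum_cons, add_comm]

theorem digits_two_sum_two_pow_mul (a n : ℕ) :
    (digits 2 (2 ^ a * n)).sum = (digits 2 n).sum := by
  rcases Nat.eq_zero_or_pos n with rfl | hn
  · simp
  · simp [digits_base_pow_mul one_lt_two hn]

theorem digits_two_sum_mul_le (a b : ℕ) :
    (digits 2 (a * b)).sum ≤ (digits 2 a).sum * (digits 2 b).sum := by
  induction b using Nat.strong_induction_on with
  | _ b ih =>
    obtain ⟨m, rfl | rfl⟩ := Nat.even_or_odd' b
    · rcases Nat.eq_zero_or_pos m with rfl | hm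
      · simp
      rw [Nat.mul_left_comm, digits_two_sum_two_mul, digits_two_sum_two_mul]
      exact ih m (by omega)
    · calc (digits 2 (a * (2 * m + 1))).sum
          = (digits 2 (2 * (a * m) + a)).sum := by ring_nf
        _ ≤ (digits 2 (a * m)).sum + (digits 2 a).sum := by
          simpa [digits_two_sum_two_mul] using digits_sum_add_le (p := 2) (2 * (a * m)) a
        _ ≤ (digits 2 a).sum * (digits 2 m).sum + (digits 2 a).sum := by
          gcongr; exact ih m (by omega)
        _ = (digits 2 a).sum * (digits 2 (2 * m + 1)).sum := by
          rw [digits_two_sum_two_mul_add_one, Nat.mul_add_one]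

theorem exists_eq_two_pow_of_digits_two_sum_eq_one {n : ℕ} (hn : (digits 2 n).sum = 1) :
    ∃ a, n = 2 ^ a := by
  induction n using Nat.strong_induction_on with
  | _ n ih =>
    obtain ⟨m, rfl | rfl⟩ := Nat.even_or_odd' n
    · rw [digits_two_sum_two_mul] at hn
      rcases Nat.eq_zero_or_pos m with rfl | hm
      · simp at hn
      obtain ⟨a, rfl⟩ := ih m (by omega) hn
      exact ⟨a + 1, by ring⟩
    · rw [digits_two_sum_two_mul_add_one, Nat.add_eq_right] at hn
      obtain rfl : m = 0 := by
        by_contra hm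
        exact (digits_sum_pos 2 hm).ne' hn
      exact ⟨0, rfl⟩

theorem odd_iff_padicValNat_two_eq_zero {n : ℕ} (hn : n ≠ 0) :
    Odd n ↔ padicValNat 2 n = 0 := by
  simp [padicValNat.eq_zero_iff, hn, ← even_iff_two_dvd]

theorem uniformBell_ne_zero (k : ℕ) {d : ℕ} (hd : d ≠ 0) : uniformBell k d ≠ 0 := fun h ↦
  factorial_ne_zero (k * d) (by simpa [h] using (uniformBell_mul_eq k hd).symm)

theorem padicValNat_two_uniformBell_add {k d : ℕ} (hd : d ≠ 0) :
    padicValNat 2 (uniformBell k d) + k + (digits 2 (k * d)).sum =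
      k * (digits 2 d).sum + (digits 2 k).sum := by
  have hv := congrArg (padicValNat 2) (uniformBell_mul_eq k hd)
  have hpow : d ! ^ k ≠ 0 := pow_ne_zero k (factorial_ne_zero d)
  rw [padicValNat.mul (mul_ne_zero (uniformBell_ne_zero k hd) hpow) (factorial_ne_zero k),
    padicValNat.mul (uniformBell_ne_zero k hd) hpow, padicValNat.pow] at hv
  have hd' := congrArg (k * ·) (padicValNat_two_factorial_add_digits_sum d)
  have hk := padicValNat_two_factorial_add_digits_sum k
  have hkd := padicValNat_two_factorial_add_digits_sum (k * d)
  simp only [Nat.mul_add] at hd'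
  omega

theorem stmt_1 (d k : ℕ) (hd : 1 ≤ d) (hk : 2 ≤ k) :
    Odd ((d * k).factorial / (k.factorial * d.factorial ^ k)) ↔ ∃ a : ℕ, d = 2 ^ a := by
  have hd0 : d ≠ 0 := by omega
  have hN : (d * k)! / (k ! * d ! ^ k) = uniformBell k d := by
    rw [uniformBell_eq_div k hd0, mul_comm d k, mul_comm (k !)]
  have hv := padicValNat_two_uniformBell_add (k := k) hd0
  rw [hN, odd_iff_padicValNat_two_eq_zero (uniformBell_ne_zero k hd0)]
  have hsub := digits_two_sum_mul_le k d
  have hsk := digits_two_sum_lt_self hk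
  have hsd := digits_sum_pos 2 hd0
  constructor
  · intro hv0
    apply exists_eq_two_pow_of_digits_two_sum_eq_one
    -- v₂ = (k - s k)(s d - 1) + (s k · s d - s (k d)), a sum of two nonnegative terms
    nlinarith
  · rintro ⟨a, rfl⟩
    have hpow : (digits 2 (2 ^ a)).sum = 1 := by simpa using digits_two_sum_two_pow_mul a 1
    rw [mul_comm, digits_two_sum_two_pow_mul, hpow] at hv
    omega
end

section
/- Let k ≥ 2 be an integer and d ≥ 1. If (dk)!/(k!·(d!)^k) is odd, then α_2(d) ≤ 1, i.e. d is a power of 2. -/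
/-!
The quotient is the uniform Bell number `uniformBell k d`, whose product formula shows that
`uniformBell 2 d = (2d-1).choose (d-1)` divides it once `k ≥ 2`. Since
`centralBinom d = 2 * (2d-1).choose (d-1)`, oddness forces `v₂(centralBinom d) = 1`. By Kummer's
theorem `v₂(centralBinom d)` counts the carries in the binary addition `d + d`, i.e. it is `α₂(d)`.
-/

namespace Nat

lemma digits_sum_pos {b n : ℕ} (hn : n ≠ 0) : 0 < (b.digits n).sum :=
  List.sum_pos_iff_exists_pos_nat.mpr ⟨_, List.getLast_mem (digits_ne_nil_iff_ne_zero.mpr hn),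
    pos_of_ne_zero (getLast_digit_ne_zero b hn)⟩

lemma digits_sum_base_mul {b : ℕ} (hb : 1 < b) (n : ℕ) :
    (digits b (b * n)).sum = (digits b n).sum := by
  rcases n.eq_zero_or_pos with rfl | hn
  · simp
  · simp [digits_base_mul hb hn]

lemma eq_two_pow_of_digits_two_sum_eq_one {n : ℕ} (h : (digits 2 n).sum = 1) :
    ∃ a, n = 2 ^ a := by
  have hn : n ≠ 0 := by rintro rfl; simp at h
  obtain ⟨a, m, hm, rfl⟩ := exists_eq_two_pow_mul_odd hn
  refine ⟨a, ?_⟩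
  rw [digits_base_pow_mul one_lt_two hm.pos, List.sum_append, List.sum_replicate, smul_zero,
    zero_add, digits_def' one_lt_two hm.pos, List.sum_cons, odd_iff.mp hm] at h
  have hm2 : m / 2 = 0 := by
    by_contra hne
    have := digits_sum_pos (b := 2) hne
    omega
  have hm1 : m = 1 := by have := odd_iff.mp hm; omega
  rw [hm1, mul_one]

lemma padicValNat_two_centralBinom (n : ℕ) :
    padicValNat 2 (centralBinom n) = (digits 2 n).sum := by
  have kummer := sub_one_mul_padicValNat_choose_eq_sub_sum_digits' (p := 2) (n := n) (k := n)
  rw [← two_mul, digits_sum_base_mul one_lt_two, ← centralBinom_eq_two_mul_choose] at kummer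
  omega

lemma centralBinom_succ_eq_two_mul_choose (n : ℕ) :
    centralBinom (n + 1) = 2 * (2 * n + 1).choose n := by
  rw [centralBinom_eq_two_mul_choose, mul_add_one, choose_succ_succ, choose_symm_half]
  exact (two_mul _).symm

lemma uniformBell_two_succ (n : ℕ) : uniformBell 2 (n + 1) = (2 * n + 1).choose n := by
  rw [uniformBell_succ_left, uniformBell_one_left, mul_one]
  congr 1
  omega

lemma uniformBell_two_dvd {m : ℕ} (hm : 2 ≤ m) (n : ℕ) : uniformBell 2 n ∣ uniformBell m n := by
  simp only [uniformBell_eq]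
  exact Finset.prod_dvd_prod_of_subset _ _ _ (Finset.range_subset_range.mpr hm)

lemma digits_two_sum_eq_one_of_odd_uniformBell {m n : ℕ} (hm : 2 ≤ m) (hn : n ≠ 0)
    (h : Odd (uniformBell m n)) : (digits 2 n).sum = 1 := by
  obtain ⟨n, rfl⟩ := exists_eq_succ_of_ne_zero hn
  have hodd : Odd ((2 * n + 1).choose n) :=
    uniformBell_two_succ n ▸ h.of_dvd_nat (uniformBell_two_dvd hm _)
  rw [← padicValNat_two_centralBinom, centralBinom_succ_eq_two_mul_choose,
    padicValNat.mul two_ne_zero hodd.pos.ne', padicValNat_self,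
    padicValNat.eq_zero_of_not_dvd hodd.not_two_dvd_nat]

end Nat

theorem stmt_6 (d k : ℕ) (hd : 1 ≤ d) (hk : 2 ≤ k)
    (h : Odd ((d * k).factorial / (k.factorial * d.factorial ^ k))) :
    (Nat.digits 2 d).sum ≤ 1 ∧ ∃ a : ℕ, d = 2 ^ a := by
  have hd' : d ≠ 0 := by omega
  rw [mul_comm d k, mul_comm k.factorial, ← Nat.uniformBell_eq_div k hd'] at h
  have hsum := Nat.digits_two_sum_eq_one_of_odd_uniformBell hk hd' h
  exact ⟨hsum.le, Nat.eq_two_pow_of_digits_two_sum_eq_one hsum⟩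
end

section
/- Let a ≥ 1 and ℓ be integers with 0 < ℓ < 2^a, and let k ≥ 2. Then the binomial coefficient C(2^a·k + ℓ, 2^a + ℓ) is odd if and only if k is odd. -/
/-!
By Lucas's theorem modulo `2`, the base-`2` digits of `2 ^ a * k + ℓ` and `2 ^ a + ℓ` below
position `a` are those of `ℓ`, and above it they are those of `k` and `1`. Hence the binomial
coefficient is congruent to `C(k, 1) * C(ℓ, ℓ) = k` modulo `2`.
-/

open Finset

lemma Nat.pow_mul_add_div_pow_mod {p a i : ℕ} (hp : 0 < p) (hi : i < a) (n r : ℕ) :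
    (p ^ a * n + r) / p ^ i % p = r / p ^ i % p := by
  obtain ⟨j, rfl⟩ := Nat.exists_eq_add_of_lt hi
  rw [show p ^ (i + j + 1) * n = p ^ i * (p * (p ^ j * n)) by ring, add_comm,
    Nat.add_mul_div_left _ _ (pow_pos hp i), Nat.add_mul_mod_self_left]

namespace Choose

variable {p : ℕ} [Fact p.Prime]

theorem choose_pow_mul_add_modEq {a n m r s : ℕ} (hr : r < p ^ a) (hs : s < p ^ a) :
    (p ^ a * n + r).choose (p ^ a * m + s) ≡ n.choose m * r.choose s [MOD p] := by
  have hp : 0 < p := Nat.pos_of_neZero p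
  have hpa : 0 < p ^ a := pow_pos hp a
  have high (n r : ℕ) (hr : r < p ^ a) : (p ^ a * n + r) / p ^ a = n := by
    rw [add_comm, Nat.add_mul_div_left _ _ hpa, Nat.div_eq_of_lt hr, zero_add]
  rw [← Int.natCast_modEq_iff]
  refine (choose_modEq_choose_mul_prod_range_choose a).trans ?_
  have low : ∏ i ∈ range a, ((p ^ a * n + r) / p ^ i % p).choose ((p ^ a * m + s) / p ^ i % p) =
      ∏ i ∈ range a, (r / p ^ i % p).choose (s / p ^ i % p) :=
    prod_congr rfl fun i hi ↦ by simp only [Nat.pow_mul_add_div_pow_mod hp (mem_range.mp hi)]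
  rw [high n r hr, high m s hs, low]
  push_cast
  exact (choose_modEq_prod_range_choose hr hs).symm.mul_left _

end Choose

theorem stmt_8_general (a ℓ k : ℕ) (hℓa : ℓ < 2 ^ a) :
    Odd (Nat.choose (2 ^ a * k + ℓ) (2 ^ a + ℓ)) ↔ Odd k := by
  have : Fact (Nat.Prime 2) := ⟨Nat.prime_two⟩
  have hmod : Nat.choose (2 ^ a * k + ℓ) (2 ^ a + ℓ) ≡ k [MOD 2] := by
    have h := Choose.choose_pow_mul_add_modEq (n := k) (m := 1) hℓa hℓa
    rw [mul_one, Nat.choose_one_right, Nat.choose_self, mul_one] at h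
    exact h
  rw [Nat.odd_iff, Nat.odd_iff, hmod]

theorem stmt_8 (a ℓ k : ℕ) (ha : 1 ≤ a) (hℓ : 0 < ℓ) (hℓa : ℓ < 2 ^ a) (hk : 2 ≤ k) :
    Odd (Nat.choose (2 ^ a * k + ℓ) (2 ^ a + ℓ)) ↔ Odd k :=
  stmt_8_general a ℓ k hℓa
end

section
/- In the polynomial ring F_2[t_1, t_2], the polynomial (t_1 + t_2)^(2^m - 1) does not belong to the ideal generated by t_1^(2^(m-1)+1) and t_2^(2^(m-1)+1), for every integer m ≥ 1. -/
/-! By Lucas' theorem every binomial coefficient `choose (2^m - 1) k` is odd, so in characteristic 2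
the polynomial `(t₁ + t₂)^(2^m - 1)` contains every monomial of its degree, in particular
`t₁^(N-1) t₂^N` with `N = 2^(m-1)`. That monomial is divisible by neither `t₁^(N+1)` nor `t₂^(N+1)`,
and membership in an ideal generated by monomials is decided monomial by monomial. -/

open MvPolynomial

theorem Nat.odd_choose_two_pow_sub_one (m : ℕ) {k : ℕ} (hk : k ≤ 2 ^ m - 1) :
    Odd ((2 ^ m - 1).choose k) := by
  induction m generalizing k with
  | zero => simp_all
  | succ m ih =>
    have hpow : 2 ^ (m + 1) = 2 * 2 ^ m := Nat.pow_succ'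
    have hpos : 1 ≤ 2 ^ m := Nat.one_le_two_pow
    have hmod : (2 ^ (m + 1) - 1) % 2 = 1 := by omega
    have hdiv : (2 ^ (m + 1) - 1) / 2 = 2 ^ m - 1 := by omega
    have hlow : Nat.choose 1 (k % 2) = 1 := by
      rcases Nat.mod_two_eq_zero_or_one k with h | h <;> simp [h]
    have lucas := Choose.choose_modEq_choose_mod_mul_choose_div_nat (n := 2 ^ (m + 1) - 1) (k := k)
      (p := 2)
    rw [hmod, hdiv, hlow, one_mul] at lucas
    rw [Nat.odd_iff, lucas, ← Nat.odd_iff]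
    exact ih (by omega)

theorem MvPolynomial.notMem_span_X_pow_pair {σ R : Type*} [CommSemiring R]
    {p : MvPolynomial σ R} {i j : σ} {a b : ℕ} (d : σ →₀ ℕ) (hd : coeff d p ≠ 0)
    (hi : d i < a) (hj : d j < b) : p ∉ Ideal.span {X i ^ a, X j ^ b} := by
  have hspan : ({X i ^ a, X j ^ b} : Set (MvPolynomial σ R)) =
      (fun s => monomial s (1 : R)) '' {Finsupp.single i a, Finsupp.single j b} := by
    simp only [Set.image_pair, X_pow_eq_monomial]
  rw [hspan, mem_ideal_span_monomial_image]
  intro h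
  obtain ⟨s, hs, hle⟩ := h d (mem_support_iff.mpr hd)
  rcases hs with rfl | rfl <;> rw [Finsupp.single_le_iff] at hle <;> omega

theorem stmt_12 (m : ℕ) (hm : 1 ≤ m) :
    ((X 0 + X 1 : MvPolynomial (Fin 2) (ZMod 2)) ^ (2 ^ m - 1)) ∉
      Ideal.span ({X 0 ^ (2 ^ (m - 1) + 1), X 1 ^ (2 ^ (m - 1) + 1)} :
        Set (MvPolynomial (Fin 2) (ZMod 2))) := by
  set N := 2 ^ (m - 1)
  have hN : 2 ^ m = 2 * N := by rw [← Nat.pow_succ', Nat.succ_eq_add_one, Nat.sub_add_cancel hm]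
  have hN1 : 1 ≤ N := Nat.one_le_two_pow
  set d : Fin 2 →₀ ℕ := Finsupp.single 0 (N - 1) + Finsupp.single 1 N
  have hd0 : d 0 = N - 1 := by simp [d]
  have hd1 : d 1 = N := by simp [d]
  apply notMem_span_X_pow_pair d
  · rw [coeff_add_pow, if_pos, ZMod.natCast_ne_zero_iff_odd]
    · exact Nat.odd_choose_two_pow_sub_one m (by omega)
    · rw [Finset.HasAntidiagonal.mem_antidiagonal, hd0, hd1]
      omega
  · omega
  · omega
end

section
/- Let d ≥ 1 and k ≥ 1. In F_2[t_1,...,t_k], the polynomial (t_1 + ... + t_k)^(dk) lies in the ideal generated by t_1^(d+1), ..., t_k^(d+1) if and only if the multinomial coefficient (dk)!/((d!)^k) is even. -/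
/-!
Every monomial of `(t_1 + ... + t_k)^(dk)` has degree `dk`, so the only one with all exponents
at most `d` is `t_1^d ⋯ t_k^d`, with coefficient the multinomial `(dk)! / (d!)^k`. A polynomial
lies in the monomial ideal `(t_1^(d+1), ..., t_k^(d+1))` exactly when each of its monomials is
divisible by some generator, i.e. exactly when that coefficient vanishes in `𝔽₂`.
-/

open Nat

namespace MvPolynomial

variable {σ R : Type*} [CommSemiring R]

theorem mem_ideal_span_range_X_pow_iff {x : MvPolynomial σ R} {n : ℕ} :
    x ∈ Ideal.span (Set.range fun i => (X i ^ n : MvPolynomial σ R)) ↔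
      ∀ m ∈ x.support, ∃ i, n ≤ m i := by
  have hrange : (Set.range fun i => (X i ^ n : MvPolynomial σ R)) =
      (fun s => monomial s (1 : R)) '' Set.range fun i => Finsupp.single i n := by
    rw [← Set.range_comp]
    simp [Function.comp_def, X_pow_eq_monomial]
  simp [hrange, mem_ideal_span_monomial_image, Finsupp.single_le_iff]

end MvPolynomial

namespace Finsupp

variable {σ : Type*} [Fintype σ]

theorem eq_equivFunOnFinite_const_of_le {m : σ →₀ ℕ} {d : ℕ} (hle : ∀ i, m i ≤ d)
    (hsum : m.sum (fun _ e => e) = d * Fintype.card σ) :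
    m = equivFunOnFinite.symm (fun _ => d) := by
  have hsum' : ∑ i, m i = ∑ _i : σ, d := by
    rw [← m.sum_fintype (fun _ e => e) fun _ => rfl, hsum, Finset.sum_const, Finset.card_univ,
      smul_eq_mul, mul_comm]
  ext i
  exact (Finset.sum_eq_sum_iff_of_le fun i _ => hle i).1 hsum' i (Finset.mem_univ i)

theorem multinomial_equivFunOnFinite_const (d : ℕ) :
    (equivFunOnFinite.symm fun _ : σ => d).multinomial =
      (d * Fintype.card σ)! / d ! ^ Fintype.card σ := by
  rw [multinomial_eq_of_support_subset (Finset.subset_univ _), Nat.multinomial]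
  simp [mul_comm]

end Finsupp

open MvPolynomial in
theorem stmt_14_general (d k : ℕ) :
    (((∑ i : Fin k, X i) ^ (d * k) : MvPolynomial (Fin k) (ZMod 2)) ∈
      Ideal.span (Set.range fun i : Fin k => (X i ^ (d + 1) : MvPolynomial (Fin k) (ZMod 2)))) ↔
      Even ((d * k).factorial / (d.factorial ^ k)) := by
  set p : MvPolynomial (Fin k) (ZMod 2) := (∑ i, X i) ^ (d * k)
  set c : Fin k →₀ ℕ := Finsupp.equivFunOnFinite.symm fun _ => d
  have hc_sum : c.sum (fun _ e => e) = d * k := by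
    simp [c, Finsupp.sum_fintype, mul_comm]
  have hc_coeff : coeff c p = ((d * k)! / d ! ^ k : ℕ) := by
    have hc_multinomial := Finsupp.multinomial_equivFunOnFinite_const (σ := Fin k) d
    rw [Fintype.card_fin] at hc_multinomial
    rw [coeff_sum_X_pow_of_fintype, if_pos hc_sum, hc_multinomial]
  have hsupport : ∀ m ∈ p.support, (∃ i, d + 1 ≤ m i) ↔ m ≠ c := by
    intro m hm
    have hm_sum : m.sum (fun _ e => e) = d * Fintype.card (Fin k) := by
      by_contra hne
      rw [Fintype.card_fin] at hne
      simp [p, coeff_sum_X_pow_of_fintype, hne] at hm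
    refine ⟨fun ⟨i, hi⟩ hmc => by simp [hmc, c] at hi, fun hmc => ?_⟩
    by_contra! hle
    exact hmc <|
      Finsupp.eq_equivFunOnFinite_const_of_le (fun i => Nat.le_of_lt_succ (hle i)) hm_sum
  rw [mem_ideal_span_range_X_pow_iff, ← ZMod.natCast_eq_zero_iff_even, ← hc_coeff,
    ← notMem_support_iff]
  refine ⟨fun h hc => (hsupport c hc).1 (h c hc) rfl, fun h m hm => (hsupport m hm).2 ?_⟩
  rintro rfl
  exact h hm

open MvPolynomial in
theorem stmt_14 (d k : ℕ) (hd : 1 ≤ d) (hk : 1 ≤ k) :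
    (((∑ i : Fin k, X i) ^ (d * k) : MvPolynomial (Fin k) (ZMod 2)) ∈
      Ideal.span (Set.range fun i : Fin k => (X i ^ (d + 1) : MvPolynomial (Fin k) (ZMod 2)))) ↔
      Even ((d * k).factorial / (d.factorial ^ k)) :=
  stmt_14_general d k
end

section
/- Let a ≥ 1, k ≥ 3 odd, and 1 ≤ ℓ ≤ 2^a - 1, and set d = 2^a + ℓ. Then C((d-ℓ)k + ℓ, d) · ((d-ℓ)(k-1))!/((k-1)!·((d-ℓ)!)^{k-1}) is odd. -/
open Nat

/-! Both factors are `≡ 1 (mod 2)` by Lucas' theorem. Writing `k = 2j + 1`, the binomial coefficient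
is `C(2^(a+1) j + d, d)` with `d < 2^(a+1)`, and the second factor is the uniform Bell number
`uniformBell (k-1) (2^a) = ∏_{i<k-1} C(2^a i + (2^a - 1), 2^a - 1)`; in each case the lower index
fits into the low base-`p` digits of the upper one, where the two agree. -/

section

variable {p : ℕ} [Fact p.Prime]

theorem Nat.choose_pow_mul_add_modEq_one {b q r : ℕ} (hr : r < p ^ b) :
    choose (p ^ b * q + r) r ≡ 1 [MOD p] := by
  induction b generalizing r with
  | zero =>
    obtain rfl : r = 0 := by simpa using hr
    rw [choose_zero_right]
  | succ b ih =>
    have hp : 0 < p := (Fact.out : p.Prime).pos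
    have hmod : (p ^ (b + 1) * q + r) % p = r % p := by
      rw [pow_succ', mul_assoc, Nat.mul_add_mod]
    have hdiv : (p ^ (b + 1) * q + r) / p = p ^ b * q + r / p := by
      rw [pow_succ', mul_assoc, Nat.mul_add_div hp]
    calc choose (p ^ (b + 1) * q + r) r
        ≡ choose ((p ^ (b + 1) * q + r) % p) (r % p) *
            choose ((p ^ (b + 1) * q + r) / p) (r / p) [MOD p] :=
          Choose.choose_modEq_choose_mod_mul_choose_div_nat
      _ = choose (p ^ b * q + r / p) (r / p) := by rw [hmod, hdiv, choose_self, one_mul]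
      _ ≡ 1 [MOD p] := ih (Nat.div_lt_of_lt_mul (by rwa [mul_comm, ← pow_succ]))

theorem Nat.uniformBell_pow_modEq_one (m b : ℕ) : uniformBell m (p ^ b) ≡ 1 [MOD p] := by
  induction m with
  | zero => rw [uniformBell_zero_left]
  | succ m ih =>
    have hpos : 0 < p ^ b := pow_pos (Fact.out : p.Prime).pos b
    rw [uniformBell_succ_left, show m * p ^ b + p ^ b - 1 = p ^ b * m + (p ^ b - 1) by
      rw [mul_comm]; omega]
    exact (choose_pow_mul_add_modEq_one (by omega)).mul ih

end

theorem stmt_19_general (a k ℓ : ℕ) (hodd : Odd k)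
    (hℓa : ℓ ≤ 2 ^ a - 1) (d : ℕ) (hd : d = 2 ^ a + ℓ) :
    Odd (Nat.choose ((d - ℓ) * k + ℓ) d *
        (((d - ℓ) * (k - 1)).factorial / ((k - 1).factorial * (d - ℓ).factorial ^ (k - 1)))) := by
  have : Fact (2 : ℕ).Prime := ⟨prime_two⟩
  have hdℓ : d - ℓ = 2 ^ a := by omega
  have hd_lt : d < 2 ^ (a + 1) := by
    have : 1 ≤ 2 ^ a := Nat.one_le_two_pow
    rw [pow_succ]; omega
  obtain ⟨j, rfl⟩ := hodd
  have hchoose : choose (2 ^ a * (2 * j + 1) + ℓ) d = choose (2 ^ (a + 1) * j + d) d := by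
    congr 1; rw [hd, pow_succ]; ring
  have hbell : (2 ^ a * (2 * j + 1 - 1))! / ((2 * j + 1 - 1)! * (2 ^ a)! ^ (2 * j + 1 - 1)) =
      uniformBell (2 * j + 1 - 1) (2 ^ a) := by
    rw [uniformBell_eq_div _ (by positivity), mul_comm (2 ^ a), mul_comm (_ !)]
  rw [hdℓ, hchoose, hbell, Nat.odd_iff]
  exact (choose_pow_mul_add_modEq_one hd_lt).mul
    (uniformBell_pow_modEq_one _ a)

theorem stmt_19 (a k ℓ : ℕ) (ha : 1 ≤ a) (hk : 3 ≤ k) (hodd : Odd k)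
    (hℓ : 1 ≤ ℓ) (hℓa : ℓ ≤ 2 ^ a - 1) (d : ℕ) (hd : d = 2 ^ a + ℓ) :
    Odd (Nat.choose ((d - ℓ) * k + ℓ) d *
        (((d - ℓ) * (k - 1)).factorial / ((k - 1).factorial * (d - ℓ).factorial ^ (k - 1)))) :=
  stmt_19_general a k ℓ hodd hℓa d hd
end
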